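/- arXiv:1410.3729 — 2 statements merged into one kernel-verified Lean document; each statement's English description precedes it below -/
import Mathlib

section
/- Let H be a complex Hilbert space and let s be a sesquilinear form on H (linear in the first argument, conjugate-linear in the second) such that Re s(w,w) ≥ c‖w‖² for all w ∈ H, where c > 1 is a constant. Then for every δ with 1/c < δ < 1 and all w, v ∈ H one has |s(w,w) − ⟨v, 2w − v⟩| ≥ (c − 1/δ)‖w‖² + (1 − δ)‖v‖². In particular there exists α > 0, depending only on c, such that |s(w,w) − ⟨v, 2w − v⟩| ≥ α(‖w‖² + ‖v‖²) for all w, v ∈ H. -/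
/-!
Expanding `⟪2w - v, v⟫ = 2⟪w, v⟫ - ‖v‖²` gives
`Re (s(w,w) - ⟪2w - v, v⟫) ≥ c‖w‖² - 2‖w‖‖v‖ + ‖v‖²`, and Young's inequality
`2‖w‖‖v‖ ≤ ‖w‖²/δ + δ‖v‖²` leaves `(c - 1/δ)‖w‖² + (1 - δ)‖v‖²`. Both coefficients are
positive exactly when `1/c < δ < 1`, an interval that is nonempty because `c > 1`.
-/

open RCLike

theorem two_mul_mul_le_sq_div_add_mul_sq {δ : ℝ} (hδ : 0 < δ) (a b : ℝ) :
    2 * a * b ≤ a ^ 2 / δ + δ * b ^ 2 :=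
  calc 2 * a * b = 2 * a * (δ * b) / δ := by field_simp
    _ ≤ (a ^ 2 + (δ * b) ^ 2) / δ := by gcongr; exact two_mul_le_add_sq a (δ * b)
    _ = a ^ 2 / δ + δ * b ^ 2 := by field_simp

section TCoercivity

variable {𝕜 E : Type*} [RCLike 𝕜] [SeminormedAddCommGroup E] [InnerProductSpace 𝕜 E]

theorem re_sub_inner_two_smul_sub (z : 𝕜) (w v : E) :
    re (z - inner 𝕜 ((2 : 𝕜) • w - v) v) = re z - 2 * re (inner 𝕜 w v) + ‖v‖ ^ 2 := by
  rw [inner_sub_left, inner_smul_left, inner_self_eq_norm_sq_to_K]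
  simp only [map_sub, map_ofNat, ofNat_mul_re, ← ofReal_pow, ofReal_re]
  ring

theorem le_norm_sub_inner_two_smul_sub {c δ : ℝ} (hδ : 0 < δ) {z : 𝕜} {w : E}
    (hz : c * ‖w‖ ^ 2 ≤ re z) (v : E) :
    (c - 1 / δ) * ‖w‖ ^ 2 + (1 - δ) * ‖v‖ ^ 2 ≤ ‖z - inner 𝕜 ((2 : 𝕜) • w - v) v‖ := by
  have hyoung := two_mul_mul_le_sq_div_add_mul_sq hδ ‖w‖ ‖v‖
  have hcs := re_inner_le_norm (𝕜 := 𝕜) w v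
  calc (c - 1 / δ) * ‖w‖ ^ 2 + (1 - δ) * ‖v‖ ^ 2
      = c * ‖w‖ ^ 2 - (‖w‖ ^ 2 / δ + δ * ‖v‖ ^ 2) + ‖v‖ ^ 2 := by ring
    _ ≤ re z - 2 * re (inner 𝕜 w v) + ‖v‖ ^ 2 := by linarith
    _ = re (z - inner 𝕜 ((2 : 𝕜) • w - v) v) := (re_sub_inner_two_smul_sub z w v).symm
    _ ≤ ‖z - inner 𝕜 ((2 : 𝕜) • w - v) v‖ := re_le_norm _

end TCoercivity

theorem sub_one_div_pos_of_one_div_lt {c δ : ℝ} (hc : 0 < c) (hδ : 1 / c < δ) :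
    0 < c - 1 / δ :=
  sub_pos.mpr ((one_div_lt ((one_div_pos.mpr hc).trans hδ) hc).mpr hδ)

-- The paper's `⟨v, 2w - v⟩`, conjugate-linear in the second slot, is Mathlib's `⟪2w - v, v⟫_ℂ`.
theorem stmt0_general {H : Type*} [NormedAddCommGroup H] [InnerProductSpace ℂ H]
    (s : H →ₗ[ℂ] H →ₗ⋆[ℂ] ℂ) (c : ℝ) (hc : 1 < c)
    (hcoer : ∀ w : H, c * ‖w‖ ^ 2 ≤ (s w w).re) :
    (∀ δ : ℝ, 1 / c < δ → δ < 1 → ∀ w v : H,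
      (c - 1 / δ) * ‖w‖ ^ 2 + (1 - δ) * ‖v‖ ^ 2
        ≤ ‖s w w - (inner ℂ ((2 : ℂ) • w - v) v : ℂ)‖) ∧
    (∃ α : ℝ, 0 < α ∧ ∀ w v : H,
      α * (‖w‖ ^ 2 + ‖v‖ ^ 2)
        ≤ ‖s w w - (inner ℂ ((2 : ℂ) • w - v) v : ℂ)‖) := by
  have hc₀ : 0 < c := one_pos.trans hc
  have hbound : ∀ δ : ℝ, 1 / c < δ → δ < 1 → ∀ w v : H,
      (c - 1 / δ) * ‖w‖ ^ 2 + (1 - δ) * ‖v‖ ^ 2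
        ≤ ‖s w w - (inner ℂ ((2 : ℂ) • w - v) v : ℂ)‖ := fun δ hδc _ w v =>
    le_norm_sub_inner_two_smul_sub ((one_div_pos.mpr hc₀).trans hδc) (hcoer w) v
  refine ⟨hbound, ?_⟩
  obtain ⟨δ, hδc, hδ1⟩ := exists_between ((div_lt_one hc₀).mpr hc)
  refine ⟨min (c - 1 / δ) (1 - δ),
    lt_min (sub_one_div_pos_of_one_div_lt hc₀ hδc) (sub_pos.mpr hδ1), fun w v => ?_⟩
  calc min (c - 1 / δ) (1 - δ) * (‖w‖ ^ 2 + ‖v‖ ^ 2)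
      ≤ (c - 1 / δ) * ‖w‖ ^ 2 + (1 - δ) * ‖v‖ ^ 2 := by
        rw [mul_add]
        gcongr
        exacts [min_le_left _ _, min_le_right _ _]
    _ ≤ _ := hbound δ hδc hδ1 w v

/-- T-coercivity estimate with `T(w,v) = (w, 2w - v)` on a complex Hilbert space:
if the sesquilinear form `s` (linear in the first argument, conjugate-linear in the
second) satisfies `Re s(w,w) ≥ c ‖w‖²` with `c > 1`, then for every `1/c < δ < 1`,
`|s(w,w) - ⟨v, 2w - v⟩| ≥ (c - 1/δ) ‖w‖² + (1 - δ) ‖v‖²`, and in particular there is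
`α > 0` depending only on `c` with
`|s(w,w) - ⟨v, 2w - v⟩| ≥ α (‖w‖² + ‖v‖²)`.
Here the inner product `⟨·,·⟩` is conjugate-linear in the second argument, so that
`⟨v, 2w - v⟩ = ⟪2w - v, v⟫_ℂ` in Mathlib's convention. -/
theorem stmt0 {H : Type*} [NormedAddCommGroup H] [InnerProductSpace ℂ H] [CompleteSpace H]
    (s : H →ₗ[ℂ] H →ₗ⋆[ℂ] ℂ) (c : ℝ) (hc : 1 < c)
    (hcoer : ∀ w : H, c * ‖w‖ ^ 2 ≤ (s w w).re) :
    (∀ δ : ℝ, 1 / c < δ → δ < 1 → ∀ w v : H,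
      (c - 1 / δ) * ‖w‖ ^ 2 + (1 - δ) * ‖v‖ ^ 2
        ≤ ‖s w w - (inner ℂ ((2 : ℂ) • w - v) v : ℂ)‖) ∧
    (∃ α : ℝ, 0 < α ∧ ∀ w v : H,
      α * (‖w‖ ^ 2 + ‖v‖ ^ 2)
        ≤ ‖s w w - (inner ℂ ((2 : ℂ) • w - v) v : ℂ)‖) :=
  stmt0_general s c hc hcoer
end

section
/- Let V be a complex vector space and let s, q, p be Hermitian positive semidefinite sesquilinear forms on V. Assume there are constants 0 < c ≤ C < 1 such that c·q(x,x) ≤ s(x,x) ≤ C·q(x,x) for all x ∈ V. Then for all δ, μ with C < δ < 1 and C < μ < 1, and all w, v ∈ V, s(w,w) + C·p(w,w) + q(v,v) + p(v,v) − 2·Re s(w,v) − 2C·Re p(w,v) ≥ c(1 − δ)·q(w,w) + C(1 − C/μ)·p(w,w) + (1 − C/δ)·q(v,v) + (1 − μ)·p(v,v), and in particular the left-hand side is bounded below by a positive constant (depending only on c, C, δ, μ) times q(w,w) + p(w,w) + q(v,v) + p(v,v). -/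
/-!
Expand the form at `T(w, v) = (w - 2v, -v)` and absorb the two cross terms by weighted
Young inequalities `2 Re b(w,v) ≤ t b(w,w) + t⁻¹ b(v,v)`, which hold for every Hermitian
positive semidefinite form `b` because `b(t w - v, t w - v) ≥ 0`. The weight `δ` on the
`s` cross term is paid for by `s ≤ C q` on `v` and leaves `(1 - δ) s(w,w) ≥ c (1 - δ) q(w,w)`;
the weight `C / μ` on the `p` cross term leaves `C (1 - C/μ) p(w,w)` and `(1 - μ) p(v,v)`.
-/

open RCLike

section Young

variable {𝕜 V : Type*} [RCLike 𝕜] [AddCommGroup V] [Module 𝕜 V]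
  (b : V →ₗ[𝕜] V →ₗ⋆[𝕜] 𝕜)

theorem re_apply_smul_sub_smul_sub (t : ℝ) (w v : V) :
    re (b ((t : 𝕜) • w - v) ((t : 𝕜) • w - v))
      = t ^ 2 * re (b w w) - t * (re (b w v) + re (b v w)) + re (b v v) := by
  simp only [map_sub, map_smul, LinearMap.sub_apply, LinearMap.smul_apply,
    LinearMap.map_smulₛₗ, smul_eq_mul, conj_ofReal, re_ofReal_mul]
  ring

theorem two_mul_re_le_of_hermitian
    (hHerm : ∀ x y : V, b y x = starRingEnd 𝕜 (b x y)) (hPos : ∀ x : V, 0 ≤ re (b x x))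
    {t : ℝ} (ht : 0 < t) (w v : V) :
    2 * re (b w v) ≤ t * re (b w w) + t⁻¹ * re (b v v) := by
  have hsymm : re (b v w) = re (b w v) := by rw [hHerm, conj_re]
  have hsq := hPos ((t : 𝕜) • w - v)
  rw [re_apply_smul_sub_smul_sub, hsymm] at hsq
  have key : t * (2 * re (b w v)) ≤ t * (t * re (b w w) + t⁻¹ * re (b v v)) := by
    rw [mul_add, mul_inv_cancel_left₀ ht.ne']
    nlinarith
  exact le_of_mul_le_mul_left key ht

end Young

theorem min_mul_add_le {α : Type*} [Semiring α] [LinearOrder α] [IsOrderedRing α]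
    {a b x y : α} (hx : 0 ≤ x) (hy : 0 ≤ y) :
    min a b * (x + y) ≤ a * x + b * y := by
  rw [mul_add]
  exact add_le_add (mul_le_mul_of_nonneg_right (min_le_left a b) hx)
    (mul_le_mul_of_nonneg_right (min_le_right a b) hy)

section Coercivity

variable {𝕜 V : Type*} [RCLike 𝕜] [AddCommGroup V] [Module 𝕜 V]
  (s q p : V →ₗ[𝕜] V →ₗ⋆[𝕜] 𝕜)

theorem tCoercivity_lower_bound
    (hsHerm : ∀ x y : V, s y x = starRingEnd 𝕜 (s x y))
    (hpHerm : ∀ x y : V, p y x = starRingEnd 𝕜 (p x y))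
    (hsPos : ∀ x : V, 0 ≤ re (s x x)) (hpPos : ∀ x : V, 0 ≤ re (p x x))
    {c C δ μ : ℝ} (hC : 0 < C) (hCδ : C < δ) (hδ : δ < 1) (hCμ : C < μ)
    (hlow : ∀ x : V, c * re (q x x) ≤ re (s x x))
    (hhigh : ∀ x : V, re (s x x) ≤ C * re (q x x)) (w v : V) :
    c * (1 - δ) * re (q w w) + C * (1 - C / μ) * re (p w w)
        + (1 - C / δ) * re (q v v) + (1 - μ) * re (p v v)
      ≤ re (s w w) + C * re (p w w) + re (q v v) + re (p v v)
          - 2 * re (s w v) - 2 * (C * re (p w v)) := by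
  have hδ0 : 0 < δ := hC.trans hCδ
  have hμ0 : 0 < μ := hC.trans hCμ
  have hs := two_mul_re_le_of_hermitian s hsHerm hsPos hδ0 w v
  have hp := mul_le_mul_of_nonneg_left
    (two_mul_re_le_of_hermitian p hpHerm hpPos (div_pos hC hμ0) w v) hC.le
  have hsw := mul_le_mul_of_nonneg_left (hlow w) (sub_nonneg.2 hδ.le)
  have hsv := mul_le_mul_of_nonneg_left (hhigh v) (inv_nonneg.2 hδ0.le)
  have hweight : C * (C / μ)⁻¹ = μ := by field_simp
  linear_combination hs + hp + hsw + hsv + re (p v v) * hweight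

end Coercivity

theorem stmt1_general {V : Type*} [AddCommGroup V] [Module ℂ V]
    (s q p : V →ₗ[ℂ] V →ₗ⋆[ℂ] ℂ)
    (hsHerm : ∀ x y : V, s y x = starRingEnd ℂ (s x y))
    (hpHerm : ∀ x y : V, p y x = starRingEnd ℂ (p x y))
    (hsPos : ∀ x : V, 0 ≤ (s x x).re)
    (hqPos : ∀ x : V, 0 ≤ (q x x).re)
    (hpPos : ∀ x : V, 0 ≤ (p x x).re)
    (c C : ℝ) (hc : 0 < c) (hcC : c ≤ C)
    (hlow : ∀ x : V, c * (q x x).re ≤ (s x x).re)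
    (hhigh : ∀ x : V, (s x x).re ≤ C * (q x x).re) :
    ∀ δ μ : ℝ, C < δ → δ < 1 → C < μ → μ < 1 →
      (∀ w v : V,
        c * (1 - δ) * (q w w).re + C * (1 - C / μ) * (p w w).re
            + (1 - C / δ) * (q v v).re + (1 - μ) * (p v v).re
          ≤ (s w w).re + C * (p w w).re + (q v v).re + (p v v).re
              - 2 * (s w v).re - 2 * (C * (p w v).re)) ∧
      (∃ κ : ℝ, 0 < κ ∧ ∀ w v : V,
        κ * ((q w w).re + (p w w).re + (q v v).re + (p v v).re)
          ≤ (s w w).re + C * (p w w).re + (q v v).re + (p v v).re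
              - 2 * (s w v).re - 2 * (C * (p w v).re)) := by
  intro δ μ hCδ hδ hCμ hμ
  have hC0 : 0 < C := hc.trans_le hcC
  have estimate :=
    tCoercivity_lower_bound s q p hsHerm hpHerm hsPos hpPos hC0 hCδ hδ hCμ hlow hhigh
  refine ⟨estimate, min (min (c * (1 - δ)) (C * (1 - C / μ))) (min (1 - C / δ) (1 - μ)),
    lt_min (lt_min (mul_pos hc (sub_pos.2 hδ))
        (mul_pos hC0 (sub_pos.2 ((div_lt_one (hC0.trans hCμ)).2 hCμ))))
      (lt_min (sub_pos.2 ((div_lt_one (hC0.trans hCδ)).2 hCδ)) (sub_pos.2 hμ)),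
    fun w v => ?_⟩
  calc _ = min (min (c * (1 - δ)) (C * (1 - C / μ))) (min (1 - C / δ) (1 - μ))
          * (((q w w).re + (p w w).re) + ((q v v).re + (p v v).re)) := by ring
    _ ≤ _ := min_mul_add_le (add_nonneg (hqPos w) (hpPos w)) (add_nonneg (hqPos v) (hpPos v))
    _ ≤ _ := add_le_add (min_mul_add_le (hqPos w) (hpPos w)) (min_mul_add_le (hqPos v) (hpPos v))
    _ ≤ _ := by rw [← add_assoc]; exact estimate w v

/-- T-coercivity estimate with `T(w,v) = (w - 2v, -v)` for Hermitian positive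
semidefinite sesquilinear forms `s, q, p` on a complex vector space, under the
sandwich `c·q(x,x) ≤ s(x,x) ≤ C·q(x,x)` with `0 < c ≤ C < 1`.  The forms are linear
in the first argument and conjugate-linear in the second, Hermitian means
`s(y,x) = conj (s(x,y))`, and positive semidefiniteness of the (then real) diagonal
values is expressed via the real part. -/
theorem stmt1 {V : Type*} [AddCommGroup V] [Module ℂ V]
    (s q p : V →ₗ[ℂ] V →ₗ⋆[ℂ] ℂ)
    (hsHerm : ∀ x y : V, s y x = starRingEnd ℂ (s x y))
    (hqHerm : ∀ x y : V, q y x = starRingEnd ℂ (q x y))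
    (hpHerm : ∀ x y : V, p y x = starRingEnd ℂ (p x y))
    (hsPos : ∀ x : V, 0 ≤ (s x x).re)
    (hqPos : ∀ x : V, 0 ≤ (q x x).re)
    (hpPos : ∀ x : V, 0 ≤ (p x x).re)
    (c C : ℝ) (hc : 0 < c) (hcC : c ≤ C) (hC : C < 1)
    (hlow : ∀ x : V, c * (q x x).re ≤ (s x x).re)
    (hhigh : ∀ x : V, (s x x).re ≤ C * (q x x).re) :
    ∀ δ μ : ℝ, C < δ → δ < 1 → C < μ → μ < 1 →
      (∀ w v : V,
        c * (1 - δ) * (q w w).re + C * (1 - C / μ) * (p w w).re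
            + (1 - C / δ) * (q v v).re + (1 - μ) * (p v v).re
          ≤ (s w w).re + C * (p w w).re + (q v v).re + (p v v).re
              - 2 * (s w v).re - 2 * (C * (p w v).re)) ∧
      (∃ κ : ℝ, 0 < κ ∧ ∀ w v : V,
        κ * ((q w w).re + (p w w).re + (q v v).re + (p v v).re)
          ≤ (s w w).re + C * (p w w).re + (q v v).re + (p v v).re
              - 2 * (s w v).re - 2 * (C * (p w v).re)) :=
  stmt1_general s q p hsHerm hpHerm hsPos hqPos hpPos c C hc hcC hlow hhigh
end
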